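/- Let A be a normed algebra, B a Banach algebra, ε, δ ≥ 0, and p, q real numbers with either p, q < 1 or p, q > 1. If f : A → B satisfies ‖f(a+b)−f(a)−f(b)‖ ≤ ε(‖a‖^p + ‖b‖^p) and ‖f(a₁⋯aₙ) − f(a₁)⋯f(aₙ)‖ ≤ δ·‖a₁‖^q⋯‖aₙ‖^q for all elements, then there exist a unique n-ring homomorphism h : A → B and a constant k > 0 with ‖f(a) − h(a)‖ ≤ kε‖a‖^p for all a ∈ A. -/

import Mathlib

/-!
Direct method of Hyers: for a suitable rational `c > 0` (`c = 2` if `p, q < 1`, `c = 1/2`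
if `p, q > 1`), the sequence `c⁻ᵐ f (cᵐ a)` is Cauchy with geometric ratio `c ^ p / c < 1`,
and its limit `h` stays within `O(ε ‖a‖ ^ p)` of `f`. Rescaling the two defects of `f` by
`cᵐ` divides them by `(c / c ^ p)ᵐ` and `(cⁿ / (c ^ q)ⁿ)ᵐ` respectively, so `h` is additive
and multiplicative on `n`-fold products. Two additive maps at distance `O(‖a‖ ^ p)` commute
with `c • ·`, so their difference vanishes by the same rescaling.
-/

open Filter Topology

section HyersSequence

variable {E F : Type*} [NormedAddCommGroup E] [NormedSpace ℝ E]
  [NormedAddCommGroup F] [NormedSpace ℝ F] {c p K : ℝ}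

noncomputable def hyersSeq (c : ℝ) (f : E → F) (m : ℕ) (a : E) : F :=
  (c ^ m)⁻¹ • f (c ^ m • a)

@[simp]
lemma hyersSeq_zero (c : ℝ) (f : E → F) : hyersSeq c f 0 = f := by
  ext a
  simp [hyersSeq]

lemma norm_pow_smul_rpow (hc : 0 ≤ c) (p : ℝ) (m : ℕ) (a : E) :
    ‖c ^ m • a‖ ^ p = (c ^ p) ^ m * ‖a‖ ^ p := by
  rw [norm_smul, Real.norm_of_nonneg (by positivity),
    Real.mul_rpow (by positivity) (norm_nonneg a), ← Real.rpow_natCast_mul hc, mul_comm (m : ℝ),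
    Real.rpow_mul_natCast hc, mul_comm]

lemma norm_inv_pow_smul_le {s t M : ℝ} (ht : 0 < t) {m : ℕ} {y : F} (hy : ‖y‖ ≤ M * s ^ m) :
    ‖(t ^ m)⁻¹ • y‖ ≤ M * (s / t) ^ m := by
  have htm : 0 < t ^ m := pow_pos ht m
  rw [norm_smul, norm_inv, Real.norm_of_nonneg htm.le, inv_mul_eq_div, div_pow, ← mul_div_assoc]
  exact div_le_div_of_nonneg_right hy htm.le

lemma tendsto_mul_div_pow_atTop_nhds_zero {s t : ℝ} (hs : 0 ≤ s) (hst : s < t) (M : ℝ) :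
    Tendsto (fun m : ℕ => M * (s / t) ^ m) atTop (𝓝 0) := by
  have ht : 0 < t := hs.trans_lt hst
  simpa using (tendsto_pow_atTop_nhds_zero_of_lt_one (by positivity)
    ((div_lt_one ht).2 hst)).const_mul M

lemma dist_hyersSeq_succ_le (hc : 0 < c) {f : E → F}
    (hf : ∀ a, ‖c⁻¹ • f (c • a) - f a‖ ≤ K * ‖a‖ ^ p) (a : E) (m : ℕ) :
    dist (hyersSeq c f m a) (hyersSeq c f (m + 1) a) ≤ K * ‖a‖ ^ p * (c ^ p / c) ^ m := by
  have h : hyersSeq c f m a - hyersSeq c f (m + 1) a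
      = (c ^ m)⁻¹ • -(c⁻¹ • f (c • c ^ m • a) - f (c ^ m • a)) := by
    simp only [hyersSeq, pow_succ, mul_inv, mul_smul, smul_comm (c ^ m) c a]
    rw [smul_neg, smul_sub, neg_sub, smul_comm (c ^ m)⁻¹ c⁻¹]
  rw [dist_eq_norm, h]
  refine norm_inv_pow_smul_le hc ?_
  rw [norm_neg, mul_assoc, mul_comm (‖a‖ ^ p), ← norm_pow_smul_rpow hc.le]
  exact hf _

lemma exists_tendsto_hyersSeq [CompleteSpace F] (hc : 0 < c) (hr : c ^ p < c) {f : E → F}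
    (hf : ∀ a, ‖c⁻¹ • f (c • a) - f a‖ ≤ K * ‖a‖ ^ p) :
    ∃ h : E → F, (∀ a, Tendsto (fun m => hyersSeq c f m a) atTop (𝓝 (h a))) ∧
      ∀ a, ‖f a - h a‖ ≤ K / (1 - c ^ p / c) * ‖a‖ ^ p := by
  have hr' : c ^ p / c < 1 := (div_lt_one hc).2 hr
  choose h hh using fun a =>
    cauchySeq_tendsto_of_complete
      (cauchySeq_of_le_geometric _ _ hr' (dist_hyersSeq_succ_le hc hf a))
  refine ⟨h, hh, fun a => ?_⟩
  have := dist_le_of_le_geometric_of_tendsto₀ _ _ hr' (dist_hyersSeq_succ_le hc hf a) (hh a)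
  rw [hyersSeq_zero, dist_eq_norm] at this
  exact this.trans_eq (by ring)

lemma map_add_of_tendsto_hyersSeq (hc : 0 < c) (hr : c ^ p < c) {ε : ℝ} {f h : E → F}
    (hadd : ∀ a b, ‖f (a + b) - f a - f b‖ ≤ ε * (‖a‖ ^ p + ‖b‖ ^ p))
    (hh : ∀ a, Tendsto (fun m => hyersSeq c f m a) atTop (𝓝 (h a))) (a b : E) :
    h (a + b) = h a + h b := by
  have hdefect : ∀ m, ‖hyersSeq c f m (a + b) - hyersSeq c f m a - hyersSeq c f m b‖
      ≤ ε * (‖a‖ ^ p + ‖b‖ ^ p) * (c ^ p / c) ^ m := by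
    intro m
    simp only [hyersSeq, smul_add, ← smul_sub]
    refine norm_inv_pow_smul_le hc ((hadd _ _).trans_eq ?_)
    rw [norm_pow_smul_rpow hc.le, norm_pow_smul_rpow hc.le]
    ring
  have := tendsto_nhds_unique (((hh _).sub (hh _)).sub (hh _))
    (squeeze_zero_norm hdefect
      (tendsto_mul_div_pow_atTop_nhds_zero (by positivity) hr _))
  rwa [sub_sub, sub_eq_zero] at this

lemma hyersSeq_eq_self {g : E → F} (hc : 0 < c) (hg : ∀ x, g (c • x) = c • g x) (m : ℕ) :
    hyersSeq c g m = g := by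
  have hpow : ∀ x, g (c ^ m • x) = c ^ m • g x := by
    induction m with
    | zero => simp
    | succ m ih => intro x; rw [pow_succ, mul_smul, ih, hg, mul_smul]
  ext x
  rw [hyersSeq, hpow, inv_smul_smul₀ (pow_ne_zero m hc.ne')]

lemma eq_zero_of_map_smul_of_norm_le_rpow (hc : 0 < c) (hr : c ^ p < c) {g : E → F}
    (hg : ∀ x, g (c • x) = c • g x) (hK : ∀ x, ‖g x‖ ≤ K * ‖x‖ ^ p) : g = 0 := by
  ext x
  have hdecay : ∀ m : ℕ, ‖g x‖ ≤ K * ‖x‖ ^ p * (c ^ p / c) ^ m := by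
    intro m
    rw [← hyersSeq_eq_self hc hg m]
    refine norm_inv_pow_smul_le hc ((hK _).trans_eq ?_)
    rw [norm_pow_smul_rpow hc.le]
    ring
  exact norm_le_zero_iff.1
    (ge_of_tendsto' (tendsto_mul_div_pow_atTop_nhds_zero (by positivity) hr _) hdecay)

lemma eq_of_map_add_of_norm_sub_le_rpow {c : ℚ} (hc : 0 < c) (hr : (c : ℝ) ^ p < c)
    {h h' : E → F} (hadd : ∀ a b, h (a + b) = h a + h b)
    (hadd' : ∀ a b, h' (a + b) = h' a + h' b)
    (hK : ∀ x, ‖h x - h' x‖ ≤ K * ‖x‖ ^ p) : h = h' := by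
  let g : E →+ F := AddMonoidHom.mk' (h - h') fun a b => by
    simp only [Pi.sub_apply, hadd, hadd']
    abel
  have hg : ⇑g = 0 :=
    eq_zero_of_map_smul_of_norm_le_rpow (Rat.cast_pos.2 hc) hr (map_ratCast_smul g ℝ ℝ c) hK
  exact sub_eq_zero.1 hg

end HyersSequence

lemma List.prod_map_smul {R M : Type*} [Monoid R] [Monoid M] [MulAction R M]
    [IsScalarTower R M M] [SMulCommClass R M M] (t : R) (l : List M) :
    (l.map (t • ·)).prod = t ^ l.length • l.prod := by
  induction l with
  | nil => simp
  | cons x l ih => simp [ih, smul_mul_smul_comm, pow_succ']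

section Doubling

variable {E F : Type*} [NormedAddCommGroup E] [NormedSpace ℝ E]
  [NormedAddCommGroup F] [NormedSpace ℝ F] {ε p : ℝ} {f : E → F}

lemma norm_inv_two_smul_map_two_smul_sub_le
    (hadd : ∀ a b, ‖f (a + b) - f a - f b‖ ≤ ε * (‖a‖ ^ p + ‖b‖ ^ p)) (a : E) :
    ‖(2 : ℝ)⁻¹ • f ((2 : ℝ) • a) - f a‖ ≤ ε * ‖a‖ ^ p := by
  have h : (2 : ℝ)⁻¹ • f ((2 : ℝ) • a) - f a = (2 : ℝ)⁻¹ • (f (a + a) - f a - f a) := by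
    rw [two_smul, smul_sub, smul_sub, sub_sub, ← add_smul]
    norm_num
  rw [h, norm_smul, Real.norm_of_nonneg (by norm_num)]
  linarith [hadd a a]

lemma norm_two_smul_map_inv_two_smul_sub_le
    (hadd : ∀ a b, ‖f (a + b) - f a - f b‖ ≤ ε * (‖a‖ ^ p + ‖b‖ ^ p)) (a : E) :
    ‖(2⁻¹ : ℝ)⁻¹ • f ((2⁻¹ : ℝ) • a) - f a‖ ≤ 2 * (2⁻¹ : ℝ) ^ p * ε * ‖a‖ ^ p := by
  set b : E := (2⁻¹ : ℝ) • a
  have ha : a = (2 : ℝ) • b := by simp [b]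
  have h : (2⁻¹ : ℝ)⁻¹ • f b - f a = -((2 : ℝ) • ((2 : ℝ)⁻¹ • f ((2 : ℝ) • b) - f b)) := by
    rw [← ha, inv_inv, smul_sub, smul_inv_smul₀ two_ne_zero, neg_sub]
  have hb : ‖b‖ ^ p = (2⁻¹ : ℝ) ^ p * ‖a‖ ^ p := by
    rw [norm_smul, Real.norm_of_nonneg (by norm_num),
      Real.mul_rpow (by norm_num) (norm_nonneg a)]
  have hhalf := norm_inv_two_smul_map_two_smul_sub_le hadd b
  rw [hb] at hhalf
  rw [h, norm_neg, norm_smul, Real.norm_of_nonneg zero_le_two]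
  linarith

end Doubling

section NRingHom

variable {A B : Type*} [NormedRing A] [NormedAlgebra ℝ A] [NormedRing B] [NormedAlgebra ℝ B]
  {n : ℕ} {c q δ : ℝ}

lemma norm_hyersSeq_prod_sub_le (hc : 0 < c) {f : A → B}
    (hmul : ∀ a : Fin n → A,
      ‖f (List.ofFn a).prod - ((List.ofFn a).map f).prod‖ ≤ δ * ∏ i, ‖a i‖ ^ q)
    (a : Fin n → A) (m : ℕ) :
    ‖hyersSeq c f (m * n) (List.ofFn a).prod - ((List.ofFn a).map (hyersSeq c f m)).prod‖
      ≤ (δ * ∏ i, ‖a i‖ ^ q) * ((c ^ q) ^ n / c ^ n) ^ m := by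
  set b : Fin n → A := fun i => c ^ m • a i
  have hprod : (List.ofFn b).prod = (c ^ m) ^ n • (List.ofFn a).prod := by
    rw [show List.ofFn b = (List.ofFn a).map (c ^ m • ·) from List.map_ofFn.symm,
      List.prod_map_smul, List.length_ofFn]
  have hmap : (List.ofFn a).map (hyersSeq c f m)
      = ((List.ofFn b).map f).map ((c ^ m)⁻¹ • ·) := by
    simp only [List.map_ofFn]
    rfl
  have hdiff :
      hyersSeq c f (m * n) (List.ofFn a).prod - ((List.ofFn a).map (hyersSeq c f m)).prod
        = ((c ^ n) ^ m)⁻¹ • (f (List.ofFn b).prod - ((List.ofFn b).map f).prod) := by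
    rw [hmap, List.prod_map_smul, List.length_map, List.length_ofFn, hprod, hyersSeq, inv_pow,
      ← pow_mul, ← pow_mul, Nat.mul_comm n m, smul_sub]
  rw [hdiff]
  refine norm_inv_pow_smul_le (pow_pos hc n) ((hmul b).trans_eq ?_)
  simp only [b, norm_pow_smul_rpow hc.le, Finset.prod_mul_distrib, Finset.prod_const,
    Finset.card_univ, Fintype.card_fin]
  ring

lemma map_prod_of_tendsto_hyersSeq (hn : 0 < n) (hc : 0 < c) (hq : c ^ q < c) {f h : A → B}
    (hmul : ∀ a : Fin n → A,
      ‖f (List.ofFn a).prod - ((List.ofFn a).map f).prod‖ ≤ δ * ∏ i, ‖a i‖ ^ q)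
    (hh : ∀ a, Tendsto (fun m => hyersSeq c f m a) atTop (𝓝 (h a))) (a : Fin n → A) :
    h (List.ofFn a).prod = ((List.ofFn a).map h).prod := by
  have hsub : Tendsto (fun m => hyersSeq c f (m * n) (List.ofFn a).prod) atTop
      (𝓝 (h (List.ofFn a).prod)) :=
    (hh _).comp (tendsto_id.atTop_mul_const' hn)
  have hprod : Tendsto (fun m => ((List.ofFn a).map (hyersSeq c f m)).prod) atTop
      (𝓝 ((List.ofFn a).map h).prod) :=
    tendsto_list_prod _ fun x _ => hh x
  have hrate : (c ^ q) ^ n < c ^ n :=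
    pow_lt_pow_left₀ hq (Real.rpow_nonneg hc.le q) hn.ne'
  have hdefect := squeeze_zero_norm (norm_hyersSeq_prod_sub_le hc hmul a)
    (tendsto_mul_div_pow_atTop_nhds_zero (by positivity) hrate _)
  exact tendsto_nhds_unique hsub (by simpa using hdefect.add hprod)

/-- The scaling factor `c` is rational so that every additive map commutes with `c • ·`. -/
theorem existsUnique_nRingHom_norm_sub_le [CompleteSpace B] (hn : 0 < n) {ε p : ℝ} {c : ℚ}
    (hc : 0 < c) (hp : (c : ℝ) ^ p < c) (hq : (c : ℝ) ^ q < c) {C : ℝ} (hC : 0 < C)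
    {f : A → B}
    (hf : ∀ a, ‖(c : ℝ)⁻¹ • f ((c : ℝ) • a) - f a‖ ≤ C * ε * ‖a‖ ^ p)
    (hadd : ∀ a b : A, ‖f (a + b) - f a - f b‖ ≤ ε * (‖a‖ ^ p + ‖b‖ ^ p))
    (hmul : ∀ a : Fin n → A,
      ‖f (List.ofFn a).prod - ((List.ofFn a).map f).prod‖ ≤ δ * ∏ i, ‖a i‖ ^ q) :
    ∃! h : A → B, (∀ a b : A, h (a + b) = h a + h b) ∧
      (∀ a : Fin n → A, h (List.ofFn a).prod = ((List.ofFn a).map h).prod) ∧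
      ∃ k : ℝ, 0 < k ∧ ∀ a : A, ‖f a - h a‖ ≤ k * ε * ‖a‖ ^ p := by
  have hc' : (0 : ℝ) < c := Rat.cast_pos.2 hc
  obtain ⟨h, hh, hbound⟩ := exists_tendsto_hyersSeq hc' hp hf
  have hk : 0 < C / (1 - (c : ℝ) ^ p / c) := div_pos hC (sub_pos.2 ((div_lt_one hc').2 hp))
  have hadd_h := map_add_of_tendsto_hyersSeq hc' hp hadd hh
  refine ⟨h, ⟨hadd_h, map_prod_of_tendsto_hyersSeq hn hc' hq hmul hh,
    _, hk, fun a => (hbound a).trans_eq (by ring)⟩, ?_⟩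
  rintro h' ⟨hadd', -, k', -, hbound'⟩
  refine eq_of_map_add_of_norm_sub_le_rpow hc hp hadd' hadd_h
    (K := (k' + C / (1 - (c : ℝ) ^ p / c)) * ε) fun a => ?_
  calc ‖h' a - h a‖ ≤ ‖h' a - f a‖ + ‖f a - h a‖ := norm_sub_le_norm_sub_add_norm_sub _ _ _
    _ = ‖f a - h' a‖ + ‖f a - h a‖ := by rw [norm_sub_rev]
    _ ≤ _ := add_le_add (hbound' a) (hbound a)
    _ = _ := by ring

end NRingHom

theorem stmt_4_general {A B : Type*} [NormedRing A] [NormedAlgebra ℝ A]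
    [NormedRing B] [NormedAlgebra ℝ B] [CompleteSpace B]
    (n : ℕ) (hn : 2 ≤ n) (ε δ : ℝ) (p q : ℝ)
    (hpq : (p < 1 ∧ q < 1) ∨ (1 < p ∧ 1 < q)) (f : A → B)
    (hadd : ∀ a b : A, ‖f (a + b) - f a - f b‖ ≤ ε * (‖a‖ ^ p + ‖b‖ ^ p))
    (hmul : ∀ a : Fin n → A,
      ‖f (List.ofFn a).prod - ((List.ofFn a).map f).prod‖
        ≤ δ * ∏ i : Fin n, ‖a i‖ ^ q) :
    ∃! h : A → B, (∀ a b : A, h (a + b) = h a + h b) ∧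
      (∀ a : Fin n → A, h (List.ofFn a).prod = ((List.ofFn a).map h).prod) ∧
      ∃ k : ℝ, 0 < k ∧ ∀ a : A, ‖f a - h a‖ ≤ k * ε * ‖a‖ ^ p := by
  have hn' : 0 < n := by omega
  rcases hpq with ⟨hp, hq⟩ | ⟨hp, hq⟩
  · have hc : ((2 : ℚ) : ℝ) = 2 := by norm_num
    refine existsUnique_nRingHom_norm_sub_le hn' (c := 2) two_pos ?_ ?_ one_pos ?_ hadd hmul
    · rw [hc]; exact Real.rpow_lt_self_of_one_lt one_lt_two hp
    · rw [hc]; exact Real.rpow_lt_self_of_one_lt one_lt_two hq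
    · simpa only [hc, one_mul] using norm_inv_two_smul_map_two_smul_sub_le hadd
  · have hc : ((2⁻¹ : ℚ) : ℝ) = 2⁻¹ := by norm_num
    refine existsUnique_nRingHom_norm_sub_le hn' (c := 2⁻¹) (by norm_num) ?_ ?_
      (C := 2 * (2⁻¹ : ℝ) ^ p) (by positivity) ?_ hadd hmul
    · rw [hc]; exact Real.rpow_lt_self_of_lt_one (by norm_num) (by norm_num) hp
    · rw [hc]; exact Real.rpow_lt_self_of_lt_one (by norm_num) (by norm_num) hq
    · rw [hc]; exact norm_two_smul_map_inv_two_smul_sub_le hadd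

/-- Hyers–Ulam–Rassias stability of n-ring homomorphisms (Theorem 2.2). -/
theorem stmt_4 {A B : Type*} [NormedRing A] [NormedAlgebra ℝ A]
    [NormedRing B] [NormedAlgebra ℝ B] [CompleteSpace B]
    (n : ℕ) (hn : 2 ≤ n) (ε δ : ℝ) (hε : 0 ≤ ε) (hδ : 0 ≤ δ) (p q : ℝ)
    (hpq : (p < 1 ∧ q < 1) ∨ (1 < p ∧ 1 < q)) (f : A → B)
    (hadd : ∀ a b : A, ‖f (a + b) - f a - f b‖ ≤ ε * (‖a‖ ^ p + ‖b‖ ^ p))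
    (hmul : ∀ a : Fin n → A,
      ‖f (List.ofFn a).prod - ((List.ofFn a).map f).prod‖
        ≤ δ * ∏ i : Fin n, ‖a i‖ ^ q) :
    ∃! h : A → B, (∀ a b : A, h (a + b) = h a + h b) ∧
      (∀ a : Fin n → A, h (List.ofFn a).prod = ((List.ofFn a).map h).prod) ∧
      ∃ k : ℝ, 0 < k ∧ ∀ a : A, ‖f a - h a‖ ≤ k * ε * ‖a‖ ^ p :=
  stmt_4_general n hn ε δ p q hpq f hadd hmul
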